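/- For every drift parameter p ∈ [1/2, 1], with A_n⁺ = {i ≥ 0 : T_i ≤ n} denoting the set of active frogs that started at non-negative sites, almost surely (1/n) · min_{i ∈ A_n⁺} Z_n^i converges to 2p − 1 as n → ∞. -/

import Mathlib

open MeasureTheory ProbabilityTheory Filter
open scoped ENNReal NNReal Topology

/-- The trajectory attached to the frog starting at site `i`:
`frogS X ω i n = ∑_{k=1}^n X_k^i(ω)` is its displacement `n` steps after its activation. -/
def frogS {Ω : Type*} (X : ℤ → ℕ → Ω → ℤ) (ω : Ω) (i : ℤ) (n : ℕ) : ℤ :=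
  ∑ k ∈ Finset.Icc 1 n, X i k ω

/-- First time (as an element of `ℕ∞`) at which the walk attached to frog `j`
(which starts at `j`) visits site `i`. -/
noncomputable def hitTime (S : ℤ → ℕ → ℤ) (j i : ℤ) : ℕ∞ :=
  sInf {t : ℕ∞ | ∃ n : ℕ, t = n ∧ j + S j n = i}

/-- Activation time `T_i` of the frog initially at site `i`, in the frog model with one
active frog at `0` and one sleeping frog at every other site: since every activated frog
follows its attached trajectory from its activation time onwards, `T_i` is the
first-passage-percolation infimum over activation chains `0 = c 0, c 1, …, c m = i` of the
sums of the successive hitting times.  This is the (unique, canonical) solution of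
`T_0 = 0`, `T_i = inf {n ∈ ℕ : ∃ j, T_j ≤ n ∧ j + S^j_{n - T_j} = i}`. -/
noncomputable def frogT (S : ℤ → ℕ → ℤ) (i : ℤ) : ℕ∞ :=
  sInf {t : ℕ∞ | ∃ (m : ℕ) (c : ℕ → ℤ), c 0 = 0 ∧ c m = i ∧
    t = ∑ l ∈ Finset.range m, hitTime S (c l) (c (l + 1))}

/-- Activation times `T_i⁺` in the frog model without negative frogs (one active frog at `0`,
one sleeping frog at every positive integer site and no frogs at negative sites):
only activation chains staying in the non-negative integers are available. -/
noncomputable def frogTplus (S : ℤ → ℕ → ℤ) (i : ℤ) : ℕ∞ :=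
  sInf {t : ℕ∞ | ∃ (m : ℕ) (c : ℕ → ℤ), c 0 = 0 ∧ c m = i ∧ (∀ l ≤ m, 0 ≤ c l) ∧
    t = ∑ l ∈ Finset.range m, hitTime S (c l) (c (l + 1))}

/-- Position `Z_n^i` of frog `i` at time `n`: it sits at `i` until its activation time and
then follows its attached trajectory. -/
noncomputable def frogZ (S : ℤ → ℕ → ℤ) (n : ℕ) (i : ℤ) : ℤ :=
  if frogT S i ≤ (n : ℕ∞) then i + S i (n - (frogT S i).toNat) else i

/-- `M_n`, the maximum of the positions of the active frogs at time `n`. -/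
noncomputable def frogM (S : ℤ → ℕ → ℤ) (n : ℕ) : ℤ :=
  sSup {z : ℤ | ∃ i : ℤ, frogT S i ≤ (n : ℕ∞) ∧ frogZ S n i = z}

/-- `m_n`, the minimum of the positions of the active frogs at time `n`. -/
noncomputable def frogm (S : ℤ → ℕ → ℤ) (n : ℕ) : ℤ :=
  sInf {z : ℤ | ∃ i : ℤ, frogT S i ≤ (n : ℕ∞) ∧ frogZ S n i = z}

/-- The set `A_n` of active frogs at time `n`, as a `Finset`.  (Activation spreads with
speed at most one, so all active frogs lie in `[-n, n]`.) -/
noncomputable def frogA (S : ℤ → ℕ → ℤ) (n : ℕ) : Finset ℤ :=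
  (Finset.Icc (-(n : ℤ)) n).filter fun i => frogT S i ≤ (n : ℕ∞)

/-- The random input of the frog model on `ℤ` with drift parameter `p`: an i.i.d. family
`(X_k^i)_{i ∈ ℤ, k ∈ ℕ}` with `P(X_k^i = 1) = p = 1 - P(X_k^i = -1)`. -/
structure IsFrogModel {Ω : Type*} [MeasurableSpace Ω] (P : Measure Ω)
    (X : ℤ → ℕ → Ω → ℤ) (p : ℝ) : Prop where
  meas : ∀ i k, Measurable (X i k)
  indep : iIndepFun (fun ik : ℤ × ℕ => X ik.1 ik.2) P
  prob_one : ∀ i k, P {ω | X i k ω = 1} = ENNReal.ofReal p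
  prob_neg_one : ∀ i k, P {ω | X i k ω = -1} = ENNReal.ofReal (1 - p)


/-!
Almost surely, by Hoeffding's inequality for the centred steps `X_k^i - (2p - 1)` and
Borel–Cantelli over the `(n + 1)²` pairs `(i, m) ∈ [0, n]²`, for every `ε > 0` and all large `n`
each trajectory `S^i` with `0 ≤ i ≤ n` stays within `εn` of the line `m ↦ (2p - 1) m` up to
time `n`.  The rest is deterministic, with `μ = 2p - 1`.  Frog `0` is active, so the minimum
is at most `S^0_n ≤ μn + εn`.  Conversely, an active frog `i ≥ 0` has `i ≤ T_i ≤ n`, and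
since frog `0` alone would activate `i` on its first visit, `S^0` stays below `i` before
time `T_i`; hence `μ (T_i - 1) - εn < i`, and
`Z_n^i = i + S^i_{n - T_i} ≥ i + μ (n - T_i) - εn ≥ μn - 2εn - |μ|`.
-/

structure IsUnitStepWalks (S : ℤ → ℕ → ℤ) : Prop where
  start : ∀ i, S i 0 = 0
  step : ∀ i m, |S i (m + 1) - S i m| ≤ 1

def NearDrift (S : ℤ → ℕ → ℤ) (μ δ : ℝ) (n : ℕ) : Prop :=
  ∀ i : ℤ, 0 ≤ i → i ≤ n → ∀ m ≤ n, |(S i m : ℝ) - μ * m| ≤ δ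

def activeNonnegPositions (S : ℤ → ℕ → ℤ) (n : ℕ) : Set ℤ :=
  {z | ∃ i : ℤ, 0 ≤ i ∧ frogT S i ≤ (n : ℕ∞) ∧ frogZ S n i = z}

section Deterministic

variable {S : ℤ → ℕ → ℤ}

theorem NearDrift.mono {μ δ δ' : ℝ} {n : ℕ} (h : NearDrift S μ δ n) (hδ : δ ≤ δ') :
    NearDrift S μ δ' n :=
  fun i hi hin m hmn => (h i hi hin m hmn).trans hδ

theorem IsUnitStepWalks.abs_apply_le (hS : IsUnitStepWalks S) (i : ℤ) (m : ℕ) : |S i m| ≤ m := by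
  induction m with
  | zero => simp [hS.start i]
  | succ m ih =>
    obtain ⟨h₁, h₂⟩ := abs_le.1 (hS.step i m)
    obtain ⟨h₃, h₄⟩ := abs_le.1 ih
    rw [abs_le]
    push_cast
    constructor <;> linarith

theorem IsUnitStepWalks.exists_eq_of_le (hS : IsUnitStepWalks S) {i a : ℤ} {t : ℕ}
    (ha : 0 ≤ a) (hat : a ≤ S i t) : ∃ s ≤ t, S i s = a := by
  induction t with
  | zero => exact ⟨0, le_rfl, by have := hS.start i; omega⟩
  | succ t ih =>
    by_cases h : a ≤ S i t
    · obtain ⟨s, hs, hsa⟩ := ih h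
      exact ⟨s, by omega, hsa⟩
    · exact ⟨t + 1, le_rfl, by have := abs_le.1 (hS.step i t); omega⟩

theorem hitTime_le_of_eq {j i : ℤ} {s : ℕ} (h : j + S j s = i) : hitTime S j i ≤ s :=
  sInf_le ⟨s, rfl, h⟩

theorem IsUnitStepWalks.natAbs_sub_le_hitTime (hS : IsUnitStepWalks S) (j i : ℤ) :
    ((i - j).natAbs : ℕ∞) ≤ hitTime S j i := by
  refine le_sInf ?_
  rintro _ ⟨n, rfl, hn⟩
  have := hS.abs_apply_le j n
  rw [Int.abs_eq_natAbs] at this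
  exact_mod_cast (by omega : (i - j).natAbs ≤ n)

theorem frogT_zero : frogT S 0 = 0 :=
  nonpos_iff_eq_zero.1 (sInf_le ⟨0, fun _ => 0, rfl, rfl, by simp⟩)

theorem frogT_le_hitTime_zero (i : ℤ) : frogT S i ≤ hitTime S 0 i :=
  sInf_le ⟨1, fun l => if l = 0 then 0 else i, by simp, by simp, by simp⟩

theorem IsUnitStepWalks.natAbs_le_frogT (hS : IsUnitStepWalks S) (i : ℤ) :
    (i.natAbs : ℕ∞) ≤ frogT S i := by
  refine le_sInf ?_
  rintro _ ⟨m, c, h0, hm, rfl⟩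
  have htel : i = ∑ l ∈ Finset.range m, (c (l + 1) - c l) := by
    rw [Finset.sum_range_sub, hm, h0, sub_zero]
  calc (i.natAbs : ℕ∞) ≤ ((∑ l ∈ Finset.range m, (c (l + 1) - c l).natAbs : ℕ) : ℕ∞) := by
        rw [htel]; exact_mod_cast Int.natAbs_sum_le _ _
    _ = ∑ l ∈ Finset.range m, ((c (l + 1) - c l).natAbs : ℕ∞) := Nat.cast_sum _ _
    _ ≤ _ := Finset.sum_le_sum fun l _ => hS.natAbs_sub_le_hitTime _ _

theorem frogZ_of_frogT_le {i : ℤ} {n : ℕ} (hT : frogT S i ≤ n) :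
    frogZ S n i = i + S i (n - (frogT S i).toNat) := if_pos hT

theorem IsUnitStepWalks.lt_of_lt_frogT (hS : IsUnitStepWalks S) {i : ℤ} (hi : 0 ≤ i) {m : ℕ}
    (hm : (m : ℕ∞) < frogT S i) : S 0 m < i := by
  by_contra! h
  obtain ⟨s, hs, hsi⟩ := hS.exists_eq_of_le hi h
  refine hm.not_ge ((frogT_le_hitTime_zero i).trans ?_)
  exact (hitTime_le_of_eq (by rw [zero_add, hsi])).trans (by exact_mod_cast hs)

theorem zero_mem_activeNonnegPositions (n : ℕ) : S 0 n ∈ activeNonnegPositions S n := by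
  have hT : frogT S 0 ≤ n := by simp [frogT_zero]
  exact ⟨0, le_rfl, hT, by simp [frogZ_of_frogT_le hT, frogT_zero]⟩

theorem IsUnitStepWalks.bddBelow_activeNonnegPositions (hS : IsUnitStepWalks S) (n : ℕ) :
    BddBelow (activeNonnegPositions S n) := by
  refine ⟨-n, ?_⟩
  rintro _ ⟨i, hi, hT, rfl⟩
  have := abs_le.1 (hS.abs_apply_le i (n - (frogT S i).toNat))
  rw [frogZ_of_frogT_le hT]
  omega

theorem IsUnitStepWalks.mul_frogT_le (hS : IsUnitStepWalks S) {μ δ : ℝ} {n : ℕ}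
    (hdev : NearDrift S μ δ n) {i : ℤ} (hi : 0 ≤ i) (hT : frogT S i ≤ n) :
    μ * (frogT S i).toNat ≤ i + δ + |μ| := by
  have hTeq : frogT S i = (frogT S i).toNat :=
    (ENat.natCast_toNat (ne_top_of_le_ne_top (ENat.natCast_ne_top n) hT)).symm
  have hTn : (frogT S i).toNat ≤ n := ENat.toNat_le_of_le_natCast hT
  have hi' : (0 : ℝ) ≤ i := by exact_mod_cast hi
  have hδ : 0 ≤ δ := (abs_nonneg _).trans (hdev 0 le_rfl (by positivity) 0 n.zero_le)
  generalize (frogT S i).toNat = t at hTeq hTn ⊢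
  cases t with
  | zero => simp only [CharP.cast_eq_zero, mul_zero]; positivity
  | succ t =>
    have hleft : (S 0 t : ℝ) < i := by
      exact_mod_cast hS.lt_of_lt_frogT hi (by rw [hTeq]; exact_mod_cast t.lt_succ_self)
    have hdev0 := abs_le.1 (hdev 0 le_rfl (by positivity) t (by omega))
    push_cast
    linarith [le_abs_self μ]

theorem IsUnitStepWalks.le_of_mem_activeNonnegPositions (hS : IsUnitStepWalks S) {μ δ : ℝ}
    {n : ℕ} (hdev : NearDrift S μ δ n) {z : ℤ} (hz : z ∈ activeNonnegPositions S n) :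
    μ * n - 2 * δ - |μ| ≤ z := by
  obtain ⟨i, hi, hT, rfl⟩ := hz
  have hTn : (frogT S i).toNat ≤ n := ENat.toNat_le_of_le_natCast hT
  have hin : i ≤ n := by
    have := ENat.natCast_le_natCast.1 ((hS.natAbs_le_frogT i).trans hT)
    omega
  have hdevi := abs_le.1 (hdev i hi hin _ (n.sub_le (frogT S i).toNat))
  have hTμ := hS.mul_frogT_le hdev hi hT
  rw [frogZ_of_frogT_le hT]
  push_cast [hTn] at hdevi ⊢
  linarith

theorem IsUnitStepWalks.abs_sInf_activeNonnegPositions_sub_le (hS : IsUnitStepWalks S)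
    {μ δ : ℝ} {n : ℕ} (hdev : NearDrift S μ δ n) :
    |((sInf (activeNonnegPositions S n) : ℤ) : ℝ) - μ * n| ≤ 2 * δ + |μ| := by
  have hbdd := hS.bddBelow_activeNonnegPositions n
  have hlow := hS.le_of_mem_activeNonnegPositions hdev
    (Int.csInf_mem ⟨_, zero_mem_activeNonnegPositions n⟩ hbdd)
  have hup : ((sInf (activeNonnegPositions S n) : ℤ) : ℝ) ≤ S 0 n := by
    exact_mod_cast csInf_le hbdd (zero_mem_activeNonnegPositions n)
  have hdev0 := abs_le.1 (hdev 0 le_rfl (by positivity) n le_rfl)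
  rw [abs_le]
  constructor <;> linarith [abs_nonneg μ]

theorem IsUnitStepWalks.tendsto_sInf_activeNonnegPositions_div (hS : IsUnitStepWalks S) {μ : ℝ}
    (hdev : ∀ ε > 0, ∀ᶠ n : ℕ in atTop, NearDrift S μ (ε * n) n) :
    Tendsto (fun n : ℕ => ((sInf (activeNonnegPositions S n) : ℤ) : ℝ) / n) atTop (𝓝 μ) := by
  rw [Metric.tendsto_nhds]
  intro δ hδ
  have hsmall : ∀ᶠ n : ℕ in atTop, |μ| / n < δ / 2 :=
    (tendsto_const_div_atTop_nhds_zero_nat |μ|).eventually (gt_mem_nhds (by positivity))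
  filter_upwards [hdev (δ / 4) (by positivity), hsmall, eventually_gt_atTop 0]
    with n hdevn hμn hpos
  have hn : (0 : ℝ) < n := by exact_mod_cast hpos
  have hbound := hS.abs_sInf_activeNonnegPositions_sub_le hdevn
  rw [div_lt_iff₀ hn] at hμn
  rw [Real.dist_eq, div_sub' hn.ne', abs_div, abs_of_pos hn, div_lt_iff₀ hn, mul_comm (n : ℝ) μ]
  linarith

end Deterministic

namespace ProbabilityTheory.HasSubgaussianMGF

variable {Ω : Type*} [MeasurableSpace Ω] {μ : Measure Ω} {Y : Ω → ℝ} {c : ℝ≥0}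

theorem mono (h : HasSubgaussianMGF Y c μ) {d : ℝ≥0} (hcd : c ≤ d) :
    HasSubgaussianMGF Y d μ :=
  ⟨h.integrable_exp_mul, fun t => (h.mgf_le t).trans (Real.exp_le_exp.2 (by gcongr))⟩

theorem measureReal_abs_ge_le [IsFiniteMeasure μ] (h : HasSubgaussianMGF Y c μ) {ε : ℝ}
    (hε : 0 ≤ ε) : μ.real {ω | ε ≤ |Y ω|} ≤ 2 * Real.exp (-ε ^ 2 / (2 * c)) := by
  calc μ.real {ω | ε ≤ |Y ω|} ≤ μ.real ({ω | ε ≤ Y ω} ∪ {ω | ε ≤ (-Y) ω}) :=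
        measureReal_mono fun ω (hω : ε ≤ |Y ω|) => le_abs.1 hω
    _ ≤ μ.real {ω | ε ≤ Y ω} + μ.real {ω | ε ≤ (-Y) ω} := measureReal_union_le _ _
    _ ≤ Real.exp (-ε ^ 2 / (2 * c)) + Real.exp (-ε ^ 2 / (2 * c)) :=
        add_le_add (h.measure_ge_le hε) (h.neg.measure_ge_le hε)
    _ = 2 * Real.exp (-ε ^ 2 / (2 * c)) := by ring

end ProbabilityTheory.HasSubgaussianMGF

theorem summable_succ_pow_mul_exp_neg_nat_mul (k : ℕ) {r : ℝ} (hr : 0 < r) :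
    Summable fun n : ℕ => ((n : ℝ) + 1) ^ k * Real.exp (-r * n) := by
  refine (((summable_nat_add_iff 1).2 (Real.summable_pow_mul_exp_neg_nat_mul k hr)).mul_left
    (Real.exp r)).congr fun n => ?_
  push_cast
  rw [mul_left_comm, ← Real.exp_add]
  ring_nf

theorem frogS_zero {Ω : Type*} (X : ℤ → ℕ → Ω → ℤ) (ω : Ω) (i : ℤ) : frogS X ω i 0 = 0 := by
  simp [frogS]

theorem frogS_succ {Ω : Type*} (X : ℤ → ℕ → Ω → ℤ) (ω : Ω) (i : ℤ) (m : ℕ) :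
    frogS X ω i (m + 1) = frogS X ω i m + X i (m + 1) ω :=
  Finset.sum_Icc_succ_top (by omega) _

theorem frogS_sub_mul_eq_sum {Ω : Type*} (X : ℤ → ℕ → Ω → ℤ) (ω : Ω) (i : ℤ) (m : ℕ) (μ : ℝ) :
    (frogS X ω i m : ℝ) - μ * m = ∑ jk ∈ {i} ×ˢ Finset.Icc 1 m, ((X jk.1 jk.2 ω : ℝ) - μ) := by
  simp [frogS, Finset.sum_sub_distrib, mul_comm]

namespace IsFrogModel

variable {Ω : Type*} [MeasurableSpace Ω] {P : Measure Ω} {X : ℤ → ℕ → Ω → ℤ} {p : ℝ}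

theorem iIndepFun_sub (h : IsFrogModel P X p) (μ : ℝ) :
    iIndepFun (fun jk : ℤ × ℕ => fun ω => (X jk.1 jk.2 ω : ℝ) - μ) P :=
  h.indep.comp (fun _ z => (z : ℝ) - μ) fun _ => by fun_prop

variable [IsProbabilityMeasure P]

theorem nonneg (h : IsFrogModel P X p) : 0 ≤ p := by
  have := h.prob_neg_one 0 0 ▸ prob_le_one
  linarith [ENNReal.ofReal_le_one.1 this]

theorem le_one (h : IsFrogModel P X p) : p ≤ 1 :=
  ENNReal.ofReal_le_one.1 (h.prob_one 0 0 ▸ prob_le_one)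

theorem ae_eq_one_or_eq_neg_one (h : IsFrogModel P X p) (i : ℤ) (k : ℕ) :
    ∀ᵐ ω ∂P, X i k ω = 1 ∨ X i k ω = -1 := by
  have hmeas (v : ℤ) : MeasurableSet {ω | X i k ω = v} := h.meas i k (measurableSet_singleton v)
  have hdisj : Disjoint {ω | X i k ω = 1} {ω | X i k ω = -1} :=
    Set.disjoint_left.2 fun ω h₁ h₂ => by simp_all
  change ∀ᵐ ω ∂P, ω ∈ {ω | X i k ω = 1} ∪ {ω | X i k ω = -1}
  rw [ae_mem_iff_measure_eq ((hmeas 1).union (hmeas (-1))).nullMeasurableSet,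
    measure_union hdisj (hmeas (-1)), h.prob_one, h.prob_neg_one,
    ← ENNReal.ofReal_add h.nonneg (by linarith [h.le_one]), measure_univ]
  simp

theorem ae_isUnitStepWalks (h : IsFrogModel P X p) : ∀ᵐ ω ∂P, IsUnitStepWalks (frogS X ω) := by
  filter_upwards [ae_all_iff.2 fun i => ae_all_iff.2 (h.ae_eq_one_or_eq_neg_one i)] with ω hω
  refine ⟨frogS_zero X ω, fun i m => ?_⟩
  rcases hω i (m + 1) with h₁ | h₁ <;> simp [frogS_succ, h₁]

theorem integral_eq (h : IsFrogModel P X p) (i : ℤ) (k : ℕ) :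
    ∫ ω, (X i k ω : ℝ) ∂P = 2 * p - 1 := by
  have hmeas : MeasurableSet {ω | X i k ω = 1} := h.meas i k (measurableSet_singleton 1)
  have hae : (fun ω => (X i k ω : ℝ)) =ᵐ[P]
      fun ω => 2 * Set.indicator {ω | X i k ω = 1} 1 ω - 1 := by
    filter_upwards [h.ae_eq_one_or_eq_neg_one i k] with ω hω
    rcases hω with h₁ | h₁ <;> norm_num [h₁]
  rw [integral_congr_ae hae, integral_sub ((integrable_const _).indicator hmeas |>.const_mul 2)
    (integrable_const 1), integral_const_mul, integral_indicator_one hmeas, measureReal_def,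
    h.prob_one, ENNReal.toReal_ofReal h.nonneg]
  simp

theorem hasSubgaussianMGF (h : IsFrogModel P X p) (i : ℤ) (k : ℕ) :
    HasSubgaussianMGF (fun ω => (X i k ω : ℝ) - (2 * p - 1)) 1 P := by
  have hbdd : ∀ᵐ ω ∂P, (X i k ω : ℝ) ∈ Set.Icc (-1) 1 := by
    filter_upwards [h.ae_eq_one_or_eq_neg_one i k] with ω hω
    rcases hω with h₁ | h₁ <;> simp [h₁]
  have := hasSubgaussianMGF_of_mem_Icc (by have := h.meas i k; fun_prop) hbdd
  rw [h.integral_eq] at this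
  convert this
  norm_num [← NNReal.coe_inj]

theorem measureReal_le_abs_frogS_sub_le (h : IsFrogModel P X p) {ε : ℝ} (hε : 0 ≤ ε) (i : ℤ)
    {m n : ℕ} (hmn : m ≤ n) :
    P.real {ω | ε * n ≤ |(frogS X ω i m : ℝ) - (2 * p - 1) * m|} ≤
      2 * Real.exp (-(ε ^ 2 / 2) * n) := by
  have hsum := (HasSubgaussianMGF.sum_of_iIndepFun (h.iIndepFun_sub (2 * p - 1))
    (s := {i} ×ˢ Finset.Icc 1 m) fun jk _ => h.hasSubgaussianMGF jk.1 jk.2).mono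
    (d := n) (by simpa using hmn)
  simp_rw [frogS_sub_mul_eq_sum]
  refine (hsum.measureReal_abs_ge_le (by positivity)).trans_eq ?_
  rcases n.eq_zero_or_pos with rfl | hn
  · simp
  · push_cast
    field_simp

theorem ae_eventually_nearDrift (h : IsFrogModel P X p) {ε : ℝ} (hε : 0 < ε) :
    ∀ᵐ ω ∂P, ∀ᶠ n : ℕ in atTop, NearDrift (frogS X ω) (2 * p - 1) (ε * n) n := by
  set bad : ℕ → Set Ω := fun n => ⋃ im ∈ Finset.range (n + 1) ×ˢ Finset.range (n + 1),
    {ω | ε * n ≤ |(frogS X ω im.1 im.2 : ℝ) - (2 * p - 1) * im.2|}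
  set b : ℕ → ℝ := fun n => 2 * (((n : ℝ) + 1) ^ 2 * Real.exp (-(ε ^ 2 / 2) * n))
  have hbad (n : ℕ) : P.real (bad n) ≤ b n := by
    refine (measureReal_biUnion_finset_le _ _).trans <|
      (Finset.sum_le_card_nsmul _ _ (2 * Real.exp (-(ε ^ 2 / 2) * n)) fun im him => ?_).trans_eq ?_
    · exact h.measureReal_le_abs_frogS_sub_le hε.le _ (by simp at him; omega)
    · simp [b]
      ring
  have hsum : ∑' n, P (bad n) < ⊤ :=
    calc ∑' n, P (bad n) ≤ ∑' n, ENNReal.ofReal (b n) := ENNReal.tsum_le_tsum fun n => by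
          rw [← ofReal_measureReal (measure_ne_top P _)]
          exact ENNReal.ofReal_le_ofReal (hbad n)
      _ = ENNReal.ofReal (∑' n, b n) := (ENNReal.ofReal_tsum_of_nonneg (fun n => by positivity)
          ((summable_succ_pow_mul_exp_neg_nat_mul 2 (by positivity)).mul_left 2)).symm
      _ < ⊤ := ENNReal.ofReal_lt_top
  filter_upwards [ae_eventually_notMem hsum.ne] with ω hω
  filter_upwards [hω] with n hn i hi hin m hmn
  by_contra! hfar
  refine hn (Set.mem_biUnion (x := (i.toNat, m)) (by simp; omega) ?_)
  simpa [Int.toNat_of_nonneg hi] using hfar.le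

theorem ae_forall_eventually_nearDrift (h : IsFrogModel P X p) :
    ∀ᵐ ω ∂P, ∀ ε > 0, ∀ᶠ n : ℕ in atTop, NearDrift (frogS X ω) (2 * p - 1) (ε * n) n := by
  filter_upwards [ae_all_iff.2 fun j : ℕ => h.ae_eventually_nearDrift (ε := 1 / (j + 1))
    (by positivity)] with ω hω ε hε
  obtain ⟨j, hj⟩ := exists_nat_one_div_lt hε
  filter_upwards [hω j] with n hn
  exact hn.mono (by gcongr)

end IsFrogModel

theorem frog_min_nonneg_frogs_general
    {Ω : Type*} [MeasurableSpace Ω] (P : Measure Ω) [IsProbabilityMeasure P]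
    (X : ℤ → ℕ → Ω → ℤ) (p : ℝ) (hmodel : IsFrogModel P X p) :
    ∀ᵐ ω ∂P, Tendsto (fun n : ℕ =>
        ((sInf {z : ℤ | ∃ i : ℤ, 0 ≤ i ∧ frogT (frogS X ω) i ≤ (n : ℕ∞) ∧
            frogZ (frogS X ω) n i = z} : ℤ) : ℝ) / n)
      atTop (𝓝 (2 * p - 1)) := by
  filter_upwards [hmodel.ae_isUnitStepWalks, hmodel.ae_forall_eventually_nearDrift]
    with ω hS hdev
  exact hS.tendsto_sInf_activeNonnegPositions_div hdev

/-- **Lemma 3 (minimum over the non-negative frogs).**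
For every drift parameter `p ∈ [1/2, 1]`, with `A_n⁺ = {i ≥ 0 : T_i ≤ n}` the set of active
frogs that started at non-negative sites, almost surely
`(1/n) · min_{i ∈ A_n⁺} Z_n^i → 2p - 1`. -/
theorem frog_min_nonneg_frogs
    {Ω : Type*} [MeasurableSpace Ω] (P : Measure Ω) [IsProbabilityMeasure P]
    (X : ℤ → ℕ → Ω → ℤ) (p : ℝ) (hmodel : IsFrogModel P X p)
    (hp : 1 / 2 ≤ p) (hp1 : p ≤ 1) :
    ∀ᵐ ω ∂P, Tendsto (fun n : ℕ =>
        ((sInf {z : ℤ | ∃ i : ℤ, 0 ≤ i ∧ frogT (frogS X ω) i ≤ (n : ℕ∞) ∧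
            frogZ (frogS X ω) n i = z} : ℤ) : ℝ) / n)
      atTop (𝓝 (2 * p - 1)) :=
  frog_min_nonneg_frogs_general P X p hmodel
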